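/- arXiv:2603.03610 — 2 statements merged into one kernel-verified Lean document; each statement's English description precedes it below -/
import Mathlib

section
/- For a smooth function h: ℝⁿ → ℝ, a positive definite symmetric matrix G (constant metric), and a differentiable curve φ: [a,b] → ℝⁿ, the action S(φ) = (1/2)∫ₐᵇ (⟨φ'(s), G φ'(s)⟩ + η² ⟨∇h(φ(s)), G⁻¹ ∇h(φ(s))⟩) ds satisfies S(φ) ≥ η |h(φ(b)) − h(φ(a))|. -/
open Matrix intervalIntegral

private lemma cont_dot {n : ℕ} {X Y : ℝ → Fin n → ℝ} (hX : Continuous X)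
    (hY : Continuous Y) : Continuous fun s => X s ⬝ᵥ Y s := by
  unfold dotProduct
  exact continuous_finset_sum _ fun i _ =>
    ((continuous_apply i).comp hX).mul ((continuous_apply i).comp hY)

private lemma cont_mulVec {n : ℕ} (M : Matrix (Fin n) (Fin n) ℝ) {Y : ℝ → Fin n → ℝ}
    (hY : Continuous Y) : Continuous fun s => M *ᵥ Y s := by
  refine continuous_pi fun i => ?_
  simp only [Matrix.mulVec, dotProduct]
  exact continuous_finset_sum _ fun j _ =>
    (continuous_const.mul ((continuous_apply j).comp hY))

private lemma quad_bound {n : ℕ} (G : Matrix (Fin n) (Fin n) ℝ) (hG : G.PosDef)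
    (hGsymm : G.IsSymm) (η : ℝ) (hη : 0 < η) (u v : Fin n → ℝ) :
    η * |v ⬝ᵥ u| ≤ (1 / 2) * (u ⬝ᵥ (G *ᵥ u) + η ^ 2 * (v ⬝ᵥ (G⁻¹ *ᵥ v))) := by
  have hdet : IsUnit G.det := isUnit_iff_ne_zero.mpr hG.det_pos.ne'
  set q := G⁻¹ *ᵥ v with hqdef
  have hq : G *ᵥ q = v := by
    rw [hqdef, Matrix.mulVec_mulVec, Matrix.mul_nonsing_inv G hdet, Matrix.one_mulVec]
  have hvm : q ᵥ* G = G *ᵥ q := by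
    rw [← Matrix.mulVec_transpose, hGsymm.eq]
  have hqu : q ⬝ᵥ (G *ᵥ u) = v ⬝ᵥ u := by
    rw [Matrix.dotProduct_mulVec, hvm, hq]
  have huq : u ⬝ᵥ (G *ᵥ q) = v ⬝ᵥ u := by
    rw [hq, dotProduct_comm]
  have hqq : q ⬝ᵥ (G *ᵥ q) = v ⬝ᵥ q := by
    rw [hq, dotProduct_comm]
  have h1 : ∀ c : ℝ, 0 ≤ u ⬝ᵥ (G *ᵥ u) + 2 * c * (v ⬝ᵥ u) + c ^ 2 * (v ⬝ᵥ q) := by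
    intro c
    have h0 := hG.posSemidef.dotProduct_mulVec_nonneg (u + c • q)
    simp only [star_trivial, Matrix.mulVec_add, Matrix.mulVec_smul, dotProduct_add,
      add_dotProduct, smul_dotProduct, dotProduct_smul,
      smul_eq_mul, hqu, huq, hqq] at h0
    nlinarith [h0]
  have hp := h1 η
  have hn := h1 (-η)
  rcases abs_cases (v ⬝ᵥ u) with ⟨he, _⟩ | ⟨he, _⟩ <;> rw [he] <;> nlinarith

/-- The gradient-descent action bounds `η |h(φ b) - h(φ a)|` from below. -/
theorem action_lower_bound {n : ℕ}
    (h : (Fin n → ℝ) → ℝ) (hh : ContDiff ℝ (⊤ : ℕ∞) h)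
    (gradh : (Fin n → ℝ) → Fin n → ℝ)
    (hgrad : ∀ x v, fderiv ℝ h x v = gradh x ⬝ᵥ v)
    (G : Matrix (Fin n) (Fin n) ℝ) (hG : G.PosDef) (hGsymm : G.IsSymm)
    (η : ℝ) (hη : 0 < η)
    (a b : ℝ) (hab : a ≤ b)
    (φ : ℝ → Fin n → ℝ) (hφ : ContDiff ℝ 1 φ) :
    η * |h (φ b) - h (φ a)| ≤
      (1 / 2) * ∫ s in a..b,
        ((deriv φ s ⬝ᵥ (G *ᵥ deriv φ s)) +
          η ^ 2 * (gradh (φ s) ⬝ᵥ (G⁻¹ *ᵥ gradh (φ s)))) := by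
  -- continuity facts
  have hφc : Continuous φ := hφ.continuous
  have hdc : Continuous (deriv φ) := hφ.continuous_deriv le_rfl
  have hgradh_eq : gradh = fun x => fun i => fderiv ℝ h x (Pi.single i 1) := by
    funext x i
    rw [hgrad]
    simp [dotProduct_single]
  have hgradh_cont : Continuous gradh := by
    rw [hgradh_eq]
    exact continuous_pi fun i =>
      (hh.continuous_fderiv (by simp)).clm_apply continuous_const
  have hgc : Continuous fun s => gradh (φ s) := hgradh_cont.comp hφc
  set f : ℝ → ℝ := fun s => gradh (φ s) ⬝ᵥ deriv φ s with hfdef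
  have hfc : Continuous f := cont_dot hgc hdc
  set F : ℝ → ℝ := fun s =>
    (deriv φ s ⬝ᵥ (G *ᵥ deriv φ s)) +
      η ^ 2 * (gradh (φ s) ⬝ᵥ (G⁻¹ *ᵥ gradh (φ s))) with hFdef
  have hFc : Continuous F :=
    (cont_dot hdc (cont_mulVec G hdc)).add
      (continuous_const.mul (cont_dot hgc (cont_mulVec G⁻¹ hgc)))
  -- fundamental theorem of calculus
  have hderiv : ∀ s ∈ Set.uIcc a b, HasDerivAt (fun t => h (φ t)) (f s) s := by
    intro s _
    have hφd : HasDerivAt φ (deriv φ s) s :=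
      ((hφ.differentiable one_ne_zero) s).hasDerivAt
    have hhd : HasFDerivAt h (fderiv ℝ h (φ s)) (φ s) :=
      ((hh.differentiable (by simp)) (φ s)).hasFDerivAt
    have := hhd.comp_hasDerivAt s hφd
    rwa [hgrad (φ s) (deriv φ s)] at this
  have key : ∫ s in a..b, f s = h (φ b) - h (φ a) :=
    intervalIntegral.integral_eq_sub_of_hasDerivAt hderiv
      (hfc.intervalIntegrable a b)
  have hpt : ∀ s, |η * f s| ≤ (1 / 2) * F s := by
    intro s
    have := quad_bound G hG hGsymm η hη (deriv φ s) (gradh (φ s))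
    rw [abs_mul, abs_of_pos hη]
    exact this
  calc η * |h (φ b) - h (φ a)|
      = |∫ s in a..b, η * f s| := by
        rw [intervalIntegral.integral_const_mul, key, abs_mul, abs_of_pos hη]
    _ ≤ ∫ s in a..b, |η * f s| := by
        exact intervalIntegral.abs_integral_le_integral_abs hab
    _ ≤ ∫ s in a..b, (1 / 2) * F s := by
        apply intervalIntegral.integral_mono_on hab
        · exact ((continuous_const.mul hfc).abs).intervalIntegrable a b
        · exact (continuous_const.mul hFc).intervalIntegrable a b
        · intro s _; exact hpt s
    _ = (1 / 2) * ∫ s in a..b, F s := intervalIntegral.integral_const_mul _ _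
end

section
/- Let H: ℝ → Matₙ(ℝ) be continuous with H(t) symmetric, H(t) ⪰ ξI, ξ > 0, and let y, y' solve y' = −H(t)(y − y_d) and (y')' = −H(t)(y' − y_d) + d(t) respectively, where ‖d(t)‖ ≤ δ for all t. Then limsup_{t→∞} ‖y(t) − y'(t)‖ ≤ δ/ξ. -/
/-!
The error `e = y - z` satisfies `e' = -H e - d`, so coercivity of `H` and `‖d‖ ≤ δ` give
`d/dt ‖e‖² ≤ -2ξ‖e‖² + 2δ‖e‖ ≤ -ξ‖e‖² + δ²/ξ` (AM-GM). By Grönwall, `‖e t‖²` is bounded by a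
function converging to `(δ/ξ)²` as `t → ∞`.
-/

open Filter Topology Real

theorem le_gronwallBound_of_hasDerivAt_le {f f' : ℝ → ℝ} {K ε a x : ℝ}
    (hf : ∀ t, HasDerivAt f (f' t) t) (bound : ∀ t, f' t ≤ K * f t + ε) (hx : a ≤ x) :
    f x ≤ gronwallBound (f a) K ε (x - a) :=
  le_gronwallBound_of_liminf_deriv_right_le (b := x)
    (fun t _ => (hf t).continuousAt.continuousWithinAt)
    (fun t _ _ hr => (hf t).hasDerivWithinAt.liminf_right_slope_le hr) le_rfl
    (fun t _ => bound t) x ⟨hx, le_rfl⟩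

theorem tendsto_gronwallBound_atTop {δ K ε : ℝ} (hK : K < 0) :
    Tendsto (gronwallBound δ K ε) atTop (𝓝 (-ε / K)) := by
  have hexp : Tendsto (fun x => exp (K * x)) atTop (𝓝 0) :=
    tendsto_exp_atBot.comp (tendsto_id.const_mul_atTop_of_neg hK)
  rw [gronwallBound_of_K_ne_0 hK.ne]
  convert (hexp.const_mul δ).add ((hexp.sub_const 1).const_mul (ε / K)) using 2
  ring

theorem limsup_norm_le_of_inner_deriv_le {E : Type*} [NormedAddCommGroup E]
    [InnerProductSpace ℝ E] {e e' : ℝ → E} {ξ δ : ℝ} (hξ : 0 < ξ) (hδ : 0 ≤ δ)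
    (he : ∀ t, HasDerivAt e (e' t) t)
    (bound : ∀ t, inner ℝ (e t) (e' t) ≤ -ξ * ‖e t‖ ^ 2 + δ * ‖e t‖) :
    limsup (fun t => ‖e t‖) atTop ≤ δ / ξ := by
  set B := gronwallBound (‖e 0‖ ^ 2) (-ξ) (δ ^ 2 / ξ)
  have hderiv_le : ∀ t, 2 * inner ℝ (e t) (e' t) ≤ -ξ * ‖e t‖ ^ 2 + δ ^ 2 / ξ := by
    intro t
    have hamgm : 2 * δ * ‖e t‖ ≤ ξ * ‖e t‖ ^ 2 + δ ^ 2 / ξ := by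
      rw [← sub_nonneg]
      have : ξ * ‖e t‖ ^ 2 + δ ^ 2 / ξ - 2 * δ * ‖e t‖ = (ξ * ‖e t‖ - δ) ^ 2 / ξ := by
        field_simp; ring
      rw [this]; positivity
    linarith [bound t]
  have hsq_le : ∀ t, 0 ≤ t → ‖e t‖ ^ 2 ≤ B t := fun t ht => by
    simpa using le_gronwallBound_of_hasDerivAt_le (fun t => (he t).norm_sq) hderiv_le ht
  have hB : Tendsto (fun t => √(B t)) atTop (𝓝 (δ / ξ)) := by
    have := (tendsto_gronwallBound_atTop (δ := ‖e 0‖ ^ 2) (ε := δ ^ 2 / ξ) (neg_lt_zero.2 hξ)).sqrt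
    convert this using 2
    rw [show -(δ ^ 2 / ξ) / -ξ = (δ / ξ) ^ 2 by field_simp, sqrt_sq (div_nonneg hδ hξ.le)]
  rw [← hB.limsup_eq]
  refine limsup_le_limsup ?_ (isCoboundedUnder_le_of_le atTop fun t => norm_nonneg (e t))
    hB.isBoundedUnder_le
  filter_upwards [eventually_ge_atTop 0] with t ht
  exact le_sqrt_of_sq_le (hsq_le t ht)

theorem disturbance_limsup_bound_general {n : ℕ}
    (H : ℝ → Matrix (Fin n) (Fin n) ℝ)
    (ξ : ℝ) (hξ : 0 < ξ)
    (hHlb : ∀ t (v : EuclideanSpace ℝ (Fin n)),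
      ξ * ‖v‖ ^ 2 ≤ inner ℝ v (Matrix.toEuclideanLin (H t) v))
    (yd : EuclideanSpace ℝ (Fin n))
    (y z : ℝ → EuclideanSpace ℝ (Fin n))
    (d : ℝ → EuclideanSpace ℝ (Fin n)) (δ : ℝ) (hδ : ∀ t, ‖d t‖ ≤ δ)
    (hy : ∀ t, HasDerivAt y (-(Matrix.toEuclideanLin (H t) (y t - yd))) t)
    (hz : ∀ t, HasDerivAt z (-(Matrix.toEuclideanLin (H t) (z t - yd)) + d t) t) :
    limsup (fun t => ‖y t - z t‖) atTop ≤ δ / ξ := by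
  set A := fun t => Matrix.toEuclideanLin (H t)
  have herr : ∀ t, HasDerivAt (fun t => y t - z t) (-A t (y t - z t) - d t) t := by
    intro t
    refine ((hy t).sub (hz t)).congr_deriv ?_
    simp only [A, map_sub]
    abel
  refine limsup_norm_le_of_inner_deriv_le hξ ((norm_nonneg _).trans (hδ 0)) herr fun t => ?_
  calc inner ℝ (y t - z t) (-A t (y t - z t) - d t)
      = -inner ℝ (y t - z t) (A t (y t - z t)) - inner ℝ (y t - z t) (d t) := by
        rw [inner_sub_right, inner_neg_right]
    _ ≤ -ξ * ‖y t - z t‖ ^ 2 + ‖y t - z t‖ * ‖d t‖ := by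
        linarith [hHlb t (y t - z t), neg_le_of_abs_le (abs_real_inner_le_norm (y t - z t) (d t))]
    _ ≤ -ξ * ‖y t - z t‖ ^ 2 + δ * ‖y t - z t‖ := by
        nlinarith [hδ t, norm_nonneg (y t - z t)]

/-- Input-to-state stability: a bounded disturbance `d(t)` with `‖d(t)‖ ≤ δ` perturbs a
`ξ`-contracting linear time-varying flow by at most `δ/ξ` asymptotically. -/
theorem disturbance_limsup_bound {n : ℕ}
    (H : ℝ → Matrix (Fin n) (Fin n) ℝ) (hHcont : Continuous H)
    (hHsymm : ∀ t, (H t).IsSymm)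
    (ξ : ℝ) (hξ : 0 < ξ)
    (hHlb : ∀ t (v : EuclideanSpace ℝ (Fin n)),
      ξ * ‖v‖ ^ 2 ≤ inner ℝ v (Matrix.toEuclideanLin (H t) v))
    (yd : EuclideanSpace ℝ (Fin n))
    (y z : ℝ → EuclideanSpace ℝ (Fin n))
    (d : ℝ → EuclideanSpace ℝ (Fin n)) (δ : ℝ) (hδ : ∀ t, ‖d t‖ ≤ δ)
    (hy : ∀ t, HasDerivAt y (-(Matrix.toEuclideanLin (H t) (y t - yd))) t)
    (hz : ∀ t, HasDerivAt z (-(Matrix.toEuclideanLin (H t) (z t - yd)) + d t) t) :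
    limsup (fun t => ‖y t - z t‖) atTop ≤ δ / ξ :=
  disturbance_limsup_bound_general H ξ hξ hHlb yd y z d δ hδ hy hz
end
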